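/- arXiv:2308.16617 — 8 statements merged into one kernel-verified Lean document; each statement's English description precedes it below -/
import Mathlib

section
/- Let X, Y be real Hilbert spaces, F : X → Y a Fréchet differentiable map, and u* ∈ X with F(u*) = φ. Suppose there are constants M > 0 and μ > 0 such that for all u in a ball B containing the iterates, ‖F'(u)‖ ≤ M and 2⟨F(u) − F(u*), F'(u)(u − u*)⟩ ≥ (M² + μ)‖F(u) − F(u*)‖². Then the Landweber iterates u_{k+1} = u_k − F'(u_k)*(F(u_k) − φ) satisfy the Fejér monotonicity estimate ‖u_{k+1} − u*‖² − ‖u_k − u*‖² ≤ −μ‖F(u_k) − φ‖² for all k with u_k ∈ B. -/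
open RealInnerProductSpace

/- With e = u_k − u*, r = F(u_k) − φ and A = F'(u_k), the Landweber step is e ↦ e − A*r, and
‖e − A*r‖² − ‖e‖² = −2⟪r, Ae⟫ + ‖A*r‖². The tangential cone condition at (u_k, u*) bounds the
first term by −(M² + μ)‖r‖², the operator bound ‖A*‖ = ‖A‖ ≤ M bounds the second by M²‖r‖². -/

namespace ContinuousLinearMap

variable {E F : Type*} [NormedAddCommGroup E] [InnerProductSpace ℝ E] [CompleteSpace E]
  [NormedAddCommGroup F] [InnerProductSpace ℝ F] [CompleteSpace F]

theorem norm_sub_adjoint_apply_sq (A : E →L[ℝ] F) (e : E) (r : F) :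
    ‖e - adjoint A r‖ ^ 2 = ‖e‖ ^ 2 - 2 * ⟪r, A e⟫ + ‖adjoint A r‖ ^ 2 := by
  rw [norm_sub_sq_real, real_inner_comm, adjoint_inner_left]

theorem norm_adjoint_apply_sq_le {A : E →L[ℝ] F} {M : ℝ} (hA : ‖A‖ ≤ M) (r : F) :
    ‖adjoint A r‖ ^ 2 ≤ M ^ 2 * ‖r‖ ^ 2 := by
  have h : ‖adjoint A r‖ ≤ M * ‖r‖ :=
    calc ‖adjoint A r‖ ≤ ‖adjoint A‖ * ‖r‖ := (adjoint A).le_opNorm r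
      _ = ‖A‖ * ‖r‖ := by rw [LinearIsometryEquiv.norm_map]
      _ ≤ M * ‖r‖ := by gcongr
  calc ‖adjoint A r‖ ^ 2 ≤ (M * ‖r‖) ^ 2 := by gcongr
    _ = M ^ 2 * ‖r‖ ^ 2 := mul_pow M ‖r‖ 2

theorem norm_sub_adjoint_apply_sq_sub_le {A : E →L[ℝ] F} {M μ : ℝ} (hA : ‖A‖ ≤ M)
    {e : E} {r : F} (hcone : 2 * ⟪r, A e⟫ ≥ (M ^ 2 + μ) * ‖r‖ ^ 2) :
    ‖e - adjoint A r‖ ^ 2 - ‖e‖ ^ 2 ≤ -μ * ‖r‖ ^ 2 := by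
  rw [norm_sub_adjoint_apply_sq]
  linarith [norm_adjoint_apply_sq_le hA r]

end ContinuousLinearMap

theorem landweber_fejer_monotone_general
    {X Y : Type*} [NormedAddCommGroup X] [InnerProductSpace ℝ X] [CompleteSpace X]
    [NormedAddCommGroup Y] [InnerProductSpace ℝ Y] [CompleteSpace Y]
    (F : X → Y) (F' : X → X →L[ℝ] Y)
    (B : Set X) (ustar : X) (φ : Y) (hsol : F ustar = φ) (hustar : ustar ∈ B)
    (M μ : ℝ)
    (hbound : ∀ u ∈ B, ‖F' u‖ ≤ M)
    (htcc : ∀ u ∈ B, ∀ v ∈ B,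
      2 * ⟪F u - F v, F' u (u - v)⟫ ≥ (M ^ 2 + μ) * ‖F u - F v‖ ^ 2)
    (u : ℕ → X)
    (hiter : ∀ k, u (k + 1) = u k - ContinuousLinearMap.adjoint (F' (u k)) (F (u k) - φ)) :
    ∀ k, u k ∈ B →
      ‖u (k + 1) - ustar‖ ^ 2 - ‖u k - ustar‖ ^ 2 ≤ -μ * ‖F (u k) - φ‖ ^ 2 := by
  intro k hk
  have hstep : u (k + 1) - ustar =
      (u k - ustar) - ContinuousLinearMap.adjoint (F' (u k)) (F (u k) - φ) := by
    rw [hiter k]; abel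
  have hcone := htcc (u k) hk ustar hustar
  rw [hsol] at hcone
  rw [hstep]
  exact ContinuousLinearMap.norm_sub_adjoint_apply_sq_sub_le (hbound (u k) hk) hcone

/-- Fejér monotonicity of the Landweber iteration under the weak tangential
cone condition. -/
theorem landweber_fejer_monotone
    {X Y : Type*} [NormedAddCommGroup X] [InnerProductSpace ℝ X] [CompleteSpace X]
    [NormedAddCommGroup Y] [InnerProductSpace ℝ Y] [CompleteSpace Y]
    (F : X → Y) (F' : X → X →L[ℝ] Y) (hF : ∀ u, HasFDerivAt F (F' u) u)
    (B : Set X) (ustar : X) (φ : Y) (hsol : F ustar = φ) (hustar : ustar ∈ B)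
    (M μ : ℝ) (hM : 0 < M) (hμ : 0 < μ)
    (hbound : ∀ u ∈ B, ‖F' u‖ ≤ M)
    (htcc : ∀ u ∈ B, ∀ v ∈ B,
      2 * ⟪F u - F v, F' u (u - v)⟫ ≥ (M ^ 2 + μ) * ‖F u - F v‖ ^ 2)
    (u : ℕ → X)
    (hiter : ∀ k, u (k + 1) = u k - ContinuousLinearMap.adjoint (F' (u k)) (F (u k) - φ)) :
    ∀ k, u k ∈ B →
      ‖u (k + 1) - ustar‖ ^ 2 - ‖u k - ustar‖ ^ 2 ≤ -μ * ‖F (u k) - φ‖ ^ 2 :=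
  landweber_fejer_monotone_general F F' B ustar φ hsol hustar M μ hbound htcc u hiter
end

section
/- Under the assumptions of Fejér monotonicity (Landweber iterates with the weak tangential cone condition with constants M < √2 and μ > 0, all iterates remaining in a ball containing a solution u* of F(u) = φ), the residuals are square-summable with the explicit bound ∑_{k=0}^∞ ‖F(u_k) − φ‖² ≤ (1/μ)‖u_0 − u*‖². -/
open RealInnerProductSpace

/-! Expanding the square, a Landweber step from `u_k` changes `‖u_k − u*‖²` by
`−2⟪F(u_k) − φ, F'(u_k)(u_k − u*)⟫ + ‖F'(u_k)*(F(u_k) − φ)‖²`; the tangential cone condition at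
`(u_k, u*)` and `‖F'(u_k)‖ ≤ M` bound this by `−μ‖F(u_k) − φ‖²` (Fejér monotonicity), and the
partial sums of the residuals telescope against `‖u_0 − u*‖²`. -/

theorem norm_sub_adjoint_sq_le {X Y : Type*}
    [NormedAddCommGroup X] [InnerProductSpace ℝ X] [CompleteSpace X]
    [NormedAddCommGroup Y] [InnerProductSpace ℝ Y] [CompleteSpace Y]
    {A : X →L[ℝ] Y} {M μ : ℝ} (hA : ‖A‖ ≤ M) {e : X} {r : Y}
    (hcone : (M ^ 2 + μ) * ‖r‖ ^ 2 ≤ 2 * ⟪r, A e⟫) :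
    ‖e - ContinuousLinearMap.adjoint A r‖ ^ 2 ≤ ‖e‖ ^ 2 - μ * ‖r‖ ^ 2 := by
  have hadj : ‖ContinuousLinearMap.adjoint A r‖ ≤ M * ‖r‖ :=
    calc ‖ContinuousLinearMap.adjoint A r‖ ≤ ‖ContinuousLinearMap.adjoint A‖ * ‖r‖ :=
          (ContinuousLinearMap.adjoint A).le_opNorm r
      _ ≤ M * ‖r‖ := by
          rw [LinearIsometryEquiv.norm_map]
          gcongr
  have hadj_sq : ‖ContinuousLinearMap.adjoint A r‖ ^ 2 ≤ M ^ 2 * ‖r‖ ^ 2 := by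
    rw [← mul_pow]
    exact pow_le_pow_left₀ (norm_nonneg _) hadj 2
  rw [norm_sub_sq_real, ContinuousLinearMap.adjoint_inner_right, real_inner_comm]
  linarith

theorem summable_and_tsum_le_of_mul_le_sub {a d : ℕ → ℝ} {μ : ℝ} (hμ : 0 < μ)
    (ha : ∀ k, 0 ≤ a k) (hd : ∀ k, 0 ≤ d k) (hstep : ∀ k, d (k + 1) ≤ d k - μ * a k) :
    Summable a ∧ ∑' k, a k ≤ d 0 / μ := by
  have hpartial : ∀ n, ∑ k ∈ Finset.range n, a k ≤ d 0 / μ := by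
    intro n
    rw [le_div_iff₀' hμ, Finset.mul_sum]
    calc ∑ k ∈ Finset.range n, μ * a k
        ≤ ∑ k ∈ Finset.range n, (d k - d (k + 1)) :=
          Finset.sum_le_sum fun k _ => by linarith [hstep k]
      _ = d 0 - d n := Finset.sum_range_sub' d n
      _ ≤ d 0 := sub_le_self _ (hd n)
  have hsum : Summable a := summable_of_sum_range_le ha hpartial
  exact ⟨hsum, hsum.tsum_le_of_sum_range_le hpartial⟩

theorem landweber_residuals_square_summable_general
    {X Y : Type*} [NormedAddCommGroup X] [InnerProductSpace ℝ X] [CompleteSpace X]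
    [NormedAddCommGroup Y] [InnerProductSpace ℝ Y] [CompleteSpace Y]
    (F : X → Y) (F' : X → X →L[ℝ] Y)
    (B : Set X) (ustar : X) (φ : Y) (hsol : F ustar = φ) (hustar : ustar ∈ B)
    (M μ : ℝ) (hμ : 0 < μ)
    (hbound : ∀ u ∈ B, ‖F' u‖ ≤ M)
    (htcc : ∀ u ∈ B, ∀ v ∈ B,
      2 * ⟪F u - F v, F' u (u - v)⟫ ≥ (M ^ 2 + μ) * ‖F u - F v‖ ^ 2)
    (u : ℕ → X)
    (hiter : ∀ k, u (k + 1) = u k - ContinuousLinearMap.adjoint (F' (u k)) (F (u k) - φ))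
    (hin : ∀ k, u k ∈ B) :
    Summable (fun k => ‖F (u k) - φ‖ ^ 2) ∧
      ∑' k : ℕ, ‖F (u k) - φ‖ ^ 2 ≤ (1 / μ) * ‖u 0 - ustar‖ ^ 2 := by
  have hfejer : ∀ k, ‖u (k + 1) - ustar‖ ^ 2 ≤ ‖u k - ustar‖ ^ 2 - μ * ‖F (u k) - φ‖ ^ 2 := by
    intro k
    have hcone := htcc (u k) (hin k) ustar hustar
    rw [hsol] at hcone
    rw [hiter k, sub_right_comm]
    exact norm_sub_adjoint_sq_le (hbound (u k) (hin k)) hcone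
  obtain ⟨hsum, hle⟩ := summable_and_tsum_le_of_mul_le_sub (d := fun k => ‖u k - ustar‖ ^ 2) hμ
    (fun k => by positivity) (fun k => by positivity) hfejer
  exact ⟨hsum, by rwa [one_div_mul_eq_div]⟩

/-- Square-summability of the residuals of the Landweber iteration, with the
explicit bound `∑ ‖F(u_k) − φ‖² ≤ (1/μ)‖u₀ − u*‖²`. -/
theorem landweber_residuals_square_summable
    {X Y : Type*} [NormedAddCommGroup X] [InnerProductSpace ℝ X] [CompleteSpace X]
    [NormedAddCommGroup Y] [InnerProductSpace ℝ Y] [CompleteSpace Y]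
    (F : X → Y) (F' : X → X →L[ℝ] Y) (hF : ∀ u, HasFDerivAt F (F' u) u)
    (B : Set X) (ustar : X) (φ : Y) (hsol : F ustar = φ) (hustar : ustar ∈ B)
    (M μ : ℝ) (hM : 0 < M) (hMs : M < Real.sqrt 2) (hμ : 0 < μ)
    (hbound : ∀ u ∈ B, ‖F' u‖ ≤ M)
    (htcc : ∀ u ∈ B, ∀ v ∈ B,
      2 * ⟪F u - F v, F' u (u - v)⟫ ≥ (M ^ 2 + μ) * ‖F u - F v‖ ^ 2)
    (u : ℕ → X)
    (hiter : ∀ k, u (k + 1) = u k - ContinuousLinearMap.adjoint (F' (u k)) (F (u k) - φ))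
    (hin : ∀ k, u k ∈ B) :
    Summable (fun k => ‖F (u k) - φ‖ ^ 2) ∧
      ∑' k : ℕ, ‖F (u k) - φ‖ ^ 2 ≤ (1 / μ) * ‖u 0 - ustar‖ ^ 2 :=
  landweber_residuals_square_summable_general F F' B ustar φ hsol hustar M μ hμ hbound htcc u hiter
    hin
end

section
/- Under the Landweber Fejér monotonicity assumptions, the gradient update steps are square-summable: ∑_{k=0}^∞ ‖u_{k+1} − u_k‖² ≤ (M²/μ)‖u_0 − u*‖², where u_{k+1} − u_k = −F'(u_k)*(F(u_k) − φ). -/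
open RealInnerProductSpace

/-! The tangential cone condition at `(u_k, u*)` makes the Landweber step a strict Fejér step:
`‖u_{k+1} − u*‖² + μ‖F(u_k) − φ‖² ≤ ‖u_k − u*‖²`, and `‖u_{k+1} − u_k‖ ≤ M‖F(u_k) − φ‖`.
Hence `‖u_{k+1} − u_k‖² ≤ (M²/μ)(‖u_k − u*‖² − ‖u_{k+1} − u*‖²)`, which telescopes. -/

theorem summable_and_tsum_le_of_le_sub_succ {a d : ℕ → ℝ} (ha : ∀ k, 0 ≤ a k)
    (hd : ∀ k, 0 ≤ d k) (h : ∀ k, a k ≤ d k - d (k + 1)) :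
    Summable a ∧ ∑' k, a k ≤ d 0 := by
  have hpartial : ∀ n, ∑ k ∈ Finset.range n, a k ≤ d 0 := fun n =>
    calc ∑ k ∈ Finset.range n, a k ≤ ∑ k ∈ Finset.range n, (d k - d (k + 1)) :=
          Finset.sum_le_sum fun k _ => h k
      _ = d 0 - d n := Finset.sum_range_sub' d n
      _ ≤ d 0 := sub_le_self _ (hd n)
  have hs := summable_of_sum_range_le ha hpartial
  exact ⟨hs, hs.tsum_le_of_sum_range_le hpartial⟩

section Adjoint

variable {X Y : Type*} [NormedAddCommGroup X] [InnerProductSpace ℝ X] [CompleteSpace X]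
  [NormedAddCommGroup Y] [InnerProductSpace ℝ Y] [CompleteSpace Y]

open ContinuousLinearMap

theorem sq_norm_adjoint_apply_le {A : X →L[ℝ] Y} {M : ℝ} (hA : ‖A‖ ≤ M) (r : Y) :
    ‖adjoint A r‖ ^ 2 ≤ M ^ 2 * ‖r‖ ^ 2 := by
  have h : ‖adjoint A r‖ ≤ M * ‖r‖ :=
    calc ‖adjoint A r‖ ≤ ‖adjoint A‖ * ‖r‖ := (adjoint A).le_opNorm r
      _ = ‖A‖ * ‖r‖ := by rw [adjoint.norm_map]
      _ ≤ M * ‖r‖ := by gcongr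
  rw [← mul_pow]
  exact pow_le_pow_left₀ (norm_nonneg _) h 2

theorem sq_norm_sub_adjoint_apply_add_le {A : X →L[ℝ] Y} {M μ : ℝ} (hA : ‖A‖ ≤ M)
    {e : X} {r : Y} (hcone : (M ^ 2 + μ) * ‖r‖ ^ 2 ≤ 2 * ⟪r, A e⟫) :
    ‖e - adjoint A r‖ ^ 2 + μ * ‖r‖ ^ 2 ≤ ‖e‖ ^ 2 := by
  have hinner : ⟪e, adjoint A r⟫ = ⟪r, A e⟫ := by
    rw [adjoint_inner_right, real_inner_comm]
  rw [norm_sub_sq_real, hinner]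
  linarith [sq_norm_adjoint_apply_le hA r]

theorem sq_norm_adjoint_apply_le_of_cone {A : X →L[ℝ] Y} {M μ : ℝ} (hμ : 0 < μ)
    (hA : ‖A‖ ≤ M) {e : X} {r : Y} (hcone : (M ^ 2 + μ) * ‖r‖ ^ 2 ≤ 2 * ⟪r, A e⟫) :
    ‖adjoint A r‖ ^ 2 ≤ M ^ 2 / μ * (‖e‖ ^ 2 - ‖e - adjoint A r‖ ^ 2) := by
  have hfejer : μ * ‖r‖ ^ 2 ≤ ‖e‖ ^ 2 - ‖e - adjoint A r‖ ^ 2 := by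
    linarith [sq_norm_sub_adjoint_apply_add_le hA hcone]
  calc ‖adjoint A r‖ ^ 2 ≤ M ^ 2 * ‖r‖ ^ 2 := sq_norm_adjoint_apply_le hA r
    _ = M ^ 2 / μ * (μ * ‖r‖ ^ 2) := by field_simp
    _ ≤ M ^ 2 / μ * (‖e‖ ^ 2 - ‖e - adjoint A r‖ ^ 2) := by gcongr

end Adjoint

theorem landweber_steps_square_summable_general
    {X Y : Type*} [NormedAddCommGroup X] [InnerProductSpace ℝ X] [CompleteSpace X]
    [NormedAddCommGroup Y] [InnerProductSpace ℝ Y] [CompleteSpace Y]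
    (F : X → Y) (F' : X → X →L[ℝ] Y)
    (B : Set X) (ustar : X) (φ : Y) (hsol : F ustar = φ) (hustar : ustar ∈ B)
    (M μ : ℝ) (hμ : 0 < μ)
    (hbound : ∀ u ∈ B, ‖F' u‖ ≤ M)
    (htcc : ∀ u ∈ B, ∀ v ∈ B,
      2 * ⟪F u - F v, F' u (u - v)⟫ ≥ (M ^ 2 + μ) * ‖F u - F v‖ ^ 2)
    (u : ℕ → X)
    (hiter : ∀ k, u (k + 1) = u k - ContinuousLinearMap.adjoint (F' (u k)) (F (u k) - φ))
    (hin : ∀ k, u k ∈ B) :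
    Summable (fun k => ‖u (k + 1) - u k‖ ^ 2) ∧
      ∑' k : ℕ, ‖u (k + 1) - u k‖ ^ 2 ≤ (M ^ 2 / μ) * ‖u 0 - ustar‖ ^ 2 := by
  refine summable_and_tsum_le_of_le_sub_succ (fun k => sq_nonneg _)
    (d := fun k => M ^ 2 / μ * ‖u k - ustar‖ ^ 2) (fun k => by positivity) fun k => ?_
  have hcone := htcc (u k) (hin k) ustar hustar
  rw [hsol] at hcone
  have hstep : u (k + 1) - u k = -ContinuousLinearMap.adjoint (F' (u k)) (F (u k) - φ) := by
    rw [hiter k]; abel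
  have herror : u (k + 1) - ustar
      = (u k - ustar) - ContinuousLinearMap.adjoint (F' (u k)) (F (u k) - φ) := by
    rw [hiter k]; abel
  rw [hstep, norm_neg, herror, ← mul_sub]
  exact sq_norm_adjoint_apply_le_of_cone hμ (hbound (u k) (hin k)) hcone.le

/-- Square-summability of the Landweber gradient update steps:
`∑ ‖u_{k+1} − u_k‖² ≤ (M²/μ)‖u₀ − u*‖²`. -/
theorem landweber_steps_square_summable
    {X Y : Type*} [NormedAddCommGroup X] [InnerProductSpace ℝ X] [CompleteSpace X]
    [NormedAddCommGroup Y] [InnerProductSpace ℝ Y] [CompleteSpace Y]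
    (F : X → Y) (F' : X → X →L[ℝ] Y) (hF : ∀ u, HasFDerivAt F (F' u) u)
    (B : Set X) (ustar : X) (φ : Y) (hsol : F ustar = φ) (hustar : ustar ∈ B)
    (M μ : ℝ) (hM : 0 < M) (hμ : 0 < μ)
    (hbound : ∀ u ∈ B, ‖F' u‖ ≤ M)
    (htcc : ∀ u ∈ B, ∀ v ∈ B,
      2 * ⟪F u - F v, F' u (u - v)⟫ ≥ (M ^ 2 + μ) * ‖F u - F v‖ ^ 2)
    (u : ℕ → X)
    (hiter : ∀ k, u (k + 1) = u k - ContinuousLinearMap.adjoint (F' (u k)) (F (u k) - φ))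
    (hin : ∀ k, u k ∈ B) :
    Summable (fun k => ‖u (k + 1) - u k‖ ^ 2) ∧
      ∑' k : ℕ, ‖u (k + 1) - u k‖ ^ 2 ≤ (M ^ 2 / μ) * ‖u 0 - ustar‖ ^ 2 :=
  landweber_steps_square_summable_general F F' B ustar φ hsol hustar M μ hμ hbound htcc u hiter hin
end

section
/- Let F : X → Y between Hilbert spaces satisfy the coercivity (Lipschitz stability) condition C‖F(u) − F(u*)‖ ≥ ‖u − u*‖^α for some C > 0, α ≥ 1, and all u in a set B containing all Landweber iterates. If additionally the residual sum bound ∑_{j=0}^k ‖F(u_j) − φ‖² ≤ (1/μ)‖u_0 − u*‖² holds and ‖u_k − u*‖ is nonincreasing, then the iterates converge with the rate ‖u_k − u*‖^{2α} ≤ (C²/(μ k))‖u_0 − u*‖², i.e., ‖u_k − u*‖ = O(k^{−1/(2α)}). -/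
/-!
Fejér monotonicity makes `‖u_j − u*‖^{2α}` nonincreasing, so the last of the first `k + 1` terms is
at most their mean. Coercivity bounds each term by `C²‖F(u_j) − φ‖²`, and the residual sum bound
then caps the total by `(C²/μ)‖u₀ − u*‖²`.
-/

open Finset

theorem Antitone.succ_mul_le_sum_range {f : ℕ → ℝ} (hf : Antitone f) (k : ℕ) :
    (k + 1 : ℝ) * f k ≤ ∑ j ∈ range (k + 1), f j := by
  simpa using card_nsmul_le_sum (range (k + 1)) f (f k) fun j hj => hf (mem_range_succ_iff.mp hj)

theorem Real.rpow_two_mul_le_sq_of_rpow_le {x α c : ℝ} (hx : 0 ≤ x) (h : x ^ α ≤ c) :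
    x ^ (2 * α) ≤ c ^ 2 := by
  rw [mul_comm, Real.rpow_mul hx, Real.rpow_two]
  exact pow_le_pow_left₀ (Real.rpow_nonneg hx α) h 2

theorem landweber_rate_under_coercivity_general
    {X Y : Type*} [NormedAddCommGroup X] [InnerProductSpace ℝ X]
    [NormedAddCommGroup Y] [InnerProductSpace ℝ Y]
    (F : X → Y) (B : Set X) (ustar : X) (φ : Y) (hsol : F ustar = φ)
    (C α μ : ℝ) (hα : 1 ≤ α)
    (hcoe : ∀ u ∈ B, C * ‖F u - F ustar‖ ≥ ‖u - ustar‖ ^ α)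
    (u : ℕ → X) (hin : ∀ k, u k ∈ B)
    (hmono : Antitone (fun k => ‖u k - ustar‖))
    (hsum : ∀ k : ℕ, ∑ j ∈ range (k + 1), ‖F (u j) - φ‖ ^ 2
      ≤ (1 / μ) * ‖u 0 - ustar‖ ^ 2) :
    ∀ k : ℕ, 1 ≤ k →
      ‖u k - ustar‖ ^ (2 * α) ≤ (C ^ 2 / (μ * k)) * ‖u 0 - ustar‖ ^ 2 := by
  intro k hk
  set e : ℕ → ℝ := fun j => ‖u j - ustar‖ ^ (2 * α)
  have he_anti : Antitone e := fun i j hij =>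
    Real.rpow_le_rpow (norm_nonneg _) (hmono hij) (by linarith)
  have he_le (j : ℕ) : e j ≤ C ^ 2 * ‖F (u j) - φ‖ ^ 2 := by
    rw [← mul_pow, ← hsol]
    exact Real.rpow_two_mul_le_sq_of_rpow_le (norm_nonneg _) (hcoe (u j) (hin j))
  have hmean : (k + 1 : ℝ) * e k ≤ C ^ 2 / μ * ‖u 0 - ustar‖ ^ 2 := calc
    _ ≤ ∑ j ∈ range (k + 1), e j := he_anti.succ_mul_le_sum_range k
    _ ≤ C ^ 2 * ∑ j ∈ range (k + 1), ‖F (u j) - φ‖ ^ 2 := by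
      rw [mul_sum]; exact sum_le_sum fun j _ => he_le j
    _ ≤ C ^ 2 * ((1 / μ) * ‖u 0 - ustar‖ ^ 2) := by gcongr; exact hsum k
    _ = C ^ 2 / μ * ‖u 0 - ustar‖ ^ 2 := by ring
  have hk0 : (0 : ℝ) < k := by exact_mod_cast hk
  have he_nonneg : 0 ≤ e k := Real.rpow_nonneg (norm_nonneg _) _
  rw [show C ^ 2 / (μ * k) * ‖u 0 - ustar‖ ^ 2 = C ^ 2 / μ * ‖u 0 - ustar‖ ^ 2 / k by ring,
    le_div_iff₀ hk0]
  linarith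

/-- Convergence rate of the lower-level Landweber iteration under coercivity
(Lipschitz-type stability): `‖u_k − u*‖^{2α} ≤ (C²/(μ k))‖u₀ − u*‖²`. -/
theorem landweber_rate_under_coercivity
    {X Y : Type*} [NormedAddCommGroup X] [InnerProductSpace ℝ X]
    [NormedAddCommGroup Y] [InnerProductSpace ℝ Y]
    (F : X → Y) (B : Set X) (ustar : X) (φ : Y) (hsol : F ustar = φ)
    (C α μ : ℝ) (hC : 0 < C) (hα : 1 ≤ α) (hμ : 0 < μ)
    (hcoe : ∀ u ∈ B, C * ‖F u - F ustar‖ ≥ ‖u - ustar‖ ^ α)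
    (u : ℕ → X) (hin : ∀ k, u k ∈ B)
    (hmono : Antitone (fun k => ‖u k - ustar‖))
    (hsum : ∀ k : ℕ, ∑ j ∈ range (k + 1), ‖F (u j) - φ‖ ^ 2
      ≤ (1 / μ) * ‖u 0 - ustar‖ ^ 2) :
    ∀ k : ℕ, 1 ≤ k →
      ‖u k - ustar‖ ^ (2 * α) ≤ (C ^ 2 / (μ * k)) * ‖u 0 - ustar‖ ^ 2 :=
  landweber_rate_under_coercivity_general F B ustar φ hsol C α μ hα hcoe u hin hmono hsum
end

section
/- Let F : X → Y be Fréchet differentiable between Hilbert spaces with Hölder continuous derivative ‖F'(u) − F'(v)‖ ≤ L‖u − v‖^β (β > 0) and satisfying coercivity C‖F(u) − F(u*)‖ ≥ ‖u − u*‖^α with β > α − 1 ≥ 0, for all u, v in a ball of radius r around a reference point, where F(u*) = φ. If r < ((1+β)/(L·C))^{1/(1+β−α)}, then the strong tangential cone condition holds: ‖F(u) − F(u*) − F'(u)(u − u*)‖ ≤ c‖F(u) − F(u*)‖ with constant c = (L·C/(1+β))·r^{1+β−α} < 1. -/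
open MeasureTheory intervalIntegral Filter

/-- Coercivity together with a Hölder continuous derivative yields the strong
tangential cone condition, with constant `c = (L·C/(1+β))·r^{1+β−α} < 1`
provided `r < ((1+β)/(L·C))^{1/(1+β−α)}`. -/
theorem strong_tcc_from_coercivity
    {X Y : Type*} [NormedAddCommGroup X] [InnerProductSpace ℝ X] [CompleteSpace X]
    [NormedAddCommGroup Y] [InnerProductSpace ℝ Y] [CompleteSpace Y]
    (F : X → Y) (F' : X → X →L[ℝ] Y) (hF : ∀ u, HasFDerivAt F (F' u) u)
    (ustar : X) (φ : Y) (hsol : F ustar = φ)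
    (r L C α β : ℝ) (hr : 0 < r) (hL : 0 ≤ L) (hC : 0 < C)
    (hα : 1 ≤ α) (hβ : 0 < β) (hβα : α - 1 < β)
    (hhoelder : ∀ u ∈ Metric.closedBall ustar r, ∀ v ∈ Metric.closedBall ustar r,
      ‖F' u - F' v‖ ≤ L * ‖u - v‖ ^ β)
    (hcoe : ∀ u ∈ Metric.closedBall ustar r,
      C * ‖F u - F ustar‖ ≥ ‖u - ustar‖ ^ α)
    (hrsmall : r < ((1 + β) / (L * C)) ^ (1 / (1 + β - α))) :
    (L * C / (1 + β)) * r ^ (1 + β - α) < 1 ∧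
      ∀ u ∈ Metric.closedBall ustar r,
        ‖F u - F ustar - F' u (u - ustar)‖ ≤
          ((L * C / (1 + β)) * r ^ (1 + β - α)) * ‖F u - F ustar‖ := by
  have he : 0 < 1 + β - α := by linarith
  have h1β : (0:ℝ) < 1 + β := by linarith
  have hLpos : 0 < L := by
    rcases hL.lt_or_eq with h | h
    · exact h
    · exfalso
      rw [← h, zero_mul, div_zero,
        Real.zero_rpow (by positivity : (1:ℝ)/(1+β-α) ≠ 0)] at hrsmall
      linarith
  have hc1 : (L * C / (1 + β)) * r ^ (1 + β - α) < 1 := by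
    have h1 : r ^ (1 + β - α) < ((1 + β) / (L * C)) ^ ((1/(1+β-α)) * (1+β-α)) := by
      rw [Real.rpow_mul (by positivity)]
      exact Real.rpow_lt_rpow hr.le hrsmall he
    rw [one_div, inv_mul_cancel₀ (ne_of_gt he), Real.rpow_one] at h1
    have h2 : (L * C / (1 + β)) * r ^ (1 + β - α)
        < (L * C / (1 + β)) * ((1 + β) / (L * C)) := by
      exact mul_lt_mul_of_pos_left h1 (by positivity)
    have heq : (L * C / (1 + β)) * ((1 + β) / (L * C)) = 1 := by
      field_simp
    linarith
  refine ⟨hc1, fun u hu => ?_⟩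
  by_cases hdeq : u = ustar
  · simp [hdeq]
  set d := u - ustar with hdd
  have hdpos : 0 < ‖d‖ := by
    simpa [hdd, sub_eq_zero] using hdeq
  have hdr : ‖d‖ ≤ r := by
    rwa [Metric.mem_closedBall, dist_eq_norm] at hu
  have hud : ustar + d = u := by rw [hdd]; abel
  have hmem : ∀ t ∈ Set.Icc (0:ℝ) 1, ustar + t • d ∈ Metric.closedBall ustar r := by
    intro t ht
    rw [Metric.mem_closedBall, dist_eq_norm]
    have : ustar + t • d - ustar = t • d := by abel
    rw [this, norm_smul]
    calc ‖t‖ * ‖d‖ ≤ 1 * r := by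
          apply mul_le_mul _ hdr (norm_nonneg _) zero_le_one
          rw [Real.norm_eq_abs, abs_le]
          exact ⟨by linarith [ht.1], ht.2⟩
      _ = r := one_mul r
  -- derivative of the path function
  have hg : ∀ t : ℝ, HasDerivAt (fun t : ℝ => F (ustar + t • d) - t • (F' u d))
      (F' (ustar + t • d) d - F' u d) t := by
    intro t
    have h1 : HasDerivAt (fun t : ℝ => ustar + t • d) d t := by
      simpa using ((hasDerivAt_id t).smul_const d).const_add ustar
    have h2 := (hF (ustar + t • d)).comp_hasDerivAt t h1
    have h3 : HasDerivAt (fun t : ℝ => t • (F' u d)) (F' u d) t := by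
      simpa using (hasDerivAt_id t).smul_const (F' u d)
    exact h2.sub h3
  -- continuity of the derivative along the path
  have hF'cont : ContinuousOn (fun t : ℝ => F' (ustar + t • d)) (Set.Icc 0 1) := by
    intro s hs
    rw [ContinuousWithinAt, tendsto_iff_norm_sub_tendsto_zero]
    have hbound : ∀ t ∈ Set.Icc (0:ℝ) 1,
        ‖F' (ustar + t • d) - F' (ustar + s • d)‖ ≤ L * (|t - s| * ‖d‖) ^ β := by
      intro t ht
      have h := hhoelder _ (hmem t ht) _ (hmem s hs)
      have heq : ustar + t • d - (ustar + s • d) = (t - s) • d := by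
        rw [sub_smul]; abel
      rwa [heq, norm_smul, Real.norm_eq_abs] at h
    have h0 : Tendsto (fun t : ℝ => L * (|t - s| * ‖d‖) ^ β)
        (nhdsWithin s (Set.Icc 0 1)) (nhds 0) := by
      have hcontf : Continuous fun t : ℝ => |t - s| * ‖d‖ :=
        ((continuous_id.sub continuous_const).abs).mul continuous_const
      have hb : Tendsto (fun t : ℝ => |t - s| * ‖d‖)
          (nhdsWithin s (Set.Icc 0 1)) (nhds 0) := by
        have h := (hcontf.tendsto s).mono_left
          (nhdsWithin_le_nhds (s := Set.Icc (0:ℝ) 1))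
        simpa using h
      have h2 := ((Real.continuousAt_rpow_const 0 β (Or.inr hβ.le)).tendsto).comp hb
      have h3 := (tendsto_const_nhds (x := L)).mul h2
      simpa [Real.zero_rpow (ne_of_gt hβ)] using h3
    exact squeeze_zero' (Eventually.of_forall fun t => norm_nonneg _)
      (eventually_of_mem self_mem_nhdsWithin hbound) h0
  have hcontg : ContinuousOn (fun t : ℝ => F' (ustar + t • d) d - F' u d) (Set.Icc 0 1) :=
    (hF'cont.clm_apply continuousOn_const).sub continuousOn_const
  have hint : IntervalIntegrable (fun t : ℝ => F' (ustar + t • d) d - F' u d)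
      volume 0 1 := by
    apply ContinuousOn.intervalIntegrable
    rwa [Set.uIcc_of_le zero_le_one]
  -- FTC
  have hftc := integral_eq_sub_of_hasDerivAt (f := fun t : ℝ => F (ustar + t • d) - t • (F' u d))
    (fun t _ => hg t) hint
  have hval : ∫ t in (0:ℝ)..1, (F' (ustar + t • d) d - F' u d)
      = F u - F ustar - F' u d := by
    rw [hftc]
    simp only [one_smul, zero_smul, sub_zero, hud]
    abel
  -- pointwise bound on the derivative
  have hKnonneg : (0:ℝ) ≤ L * ‖d‖ ^ (1 + β) := by positivity
  have hnorm : ∀ t ∈ Set.Icc (0:ℝ) 1,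
      ‖F' (ustar + t • d) d - F' u d‖ ≤ (L * ‖d‖ ^ (1 + β)) * (1 - t) ^ β := by
    intro t ht
    have h1 : ‖F' (ustar + t • d) - F' u‖ ≤ L * ((1 - t) * ‖d‖) ^ β := by
      have h := hhoelder _ (hmem t ht) _ hu
      have heq : ustar + t • d - u = -((1 - t) • d) := by
        rw [sub_smul, one_smul, hdd]; abel
      rw [heq, norm_neg, norm_smul, Real.norm_eq_abs, abs_of_nonneg (by linarith [ht.2])] at h
      exact h
    have h2 : ‖F' (ustar + t • d) d - F' u d‖ ≤ ‖F' (ustar + t • d) - F' u‖ * ‖d‖ := by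
      have := (F' (ustar + t • d) - F' u).le_opNorm d
      simpa using this
    have h3 : L * ((1 - t) * ‖d‖) ^ β * ‖d‖ = (L * ‖d‖ ^ (1 + β)) * (1 - t) ^ β := by
      rw [Real.mul_rpow (by linarith [ht.2]) (norm_nonneg d), add_comm,
        Real.rpow_add_one (ne_of_gt hdpos)]
      ring
    calc ‖F' (ustar + t • d) d - F' u d‖ ≤ ‖F' (ustar + t • d) - F' u‖ * ‖d‖ := h2
      _ ≤ L * ((1 - t) * ‖d‖) ^ β * ‖d‖ :=
          mul_le_mul_of_nonneg_right h1 (norm_nonneg d)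
      _ = (L * ‖d‖ ^ (1 + β)) * (1 - t) ^ β := h3
  -- the elementary integral
  have hI : ∫ t in (0:ℝ)..1, ((L * ‖d‖ ^ (1 + β)) * (1 - t) ^ β)
      = L * ‖d‖ ^ (1 + β) / (1 + β) := by
    rw [intervalIntegral.integral_const_mul]
    have : ∫ t in (0:ℝ)..1, (1 - t) ^ β = 1 / (1 + β) := by
      rw [intervalIntegral.integral_comp_sub_left (fun x => x ^ β) 1]
      norm_num
      rw [integral_rpow (Or.inl (by linarith : (-1:ℝ) < β))]
      rw [Real.one_rpow, Real.zero_rpow (by positivity : β + 1 ≠ 0)]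
      rw [sub_zero, add_comm]
      rw [one_div]
    rw [this]; ring
  have hcontb : Continuous (fun t : ℝ => (L * ‖d‖ ^ (1 + β)) * (1 - t) ^ β) := by
    apply continuous_const.mul
    have hrp : Continuous (fun x : ℝ => x ^ β) :=
      continuous_iff_continuousAt.2 fun x => Real.continuousAt_rpow_const x β (Or.inr hβ.le)
    exact hrp.comp (continuous_const.sub continuous_id)
  have hbnd : ‖F u - F ustar - F' u d‖ ≤ L * ‖d‖ ^ (1 + β) / (1 + β) := by
    rw [← hval]
    have hae : ∀ᵐ t ∂(volume.restrict (Set.uIoc (0:ℝ) 1)),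
        ‖F' (ustar + t • d) d - F' u d‖ ≤ (L * ‖d‖ ^ (1 + β)) * (1 - t) ^ β := by
      rw [Set.uIoc_of_le zero_le_one]
      filter_upwards [ae_restrict_mem measurableSet_Ioc] with t ht
      exact hnorm t (Set.Ioc_subset_Icc_self ht)
    have h := intervalIntegral.norm_integral_le_abs_of_norm_le hae (hcontb.intervalIntegrable 0 1)
    rw [hI, abs_of_nonneg (by positivity)] at h
    exact h
  -- combine with coercivity
  have hsplit : ‖d‖ ^ (1 + β) = ‖d‖ ^ (1 + β - α) * ‖d‖ ^ α := by
    rw [← Real.rpow_add hdpos]; ring_nf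
  have h1 : ‖d‖ ^ (1 + β - α) ≤ r ^ (1 + β - α) :=
    Real.rpow_le_rpow (norm_nonneg d) hdr he.le
  have h2 : ‖d‖ ^ α ≤ C * ‖F u - F ustar‖ := hcoe u hu
  calc ‖F u - F ustar - F' u (u - ustar)‖
      ≤ L * ‖d‖ ^ (1 + β) / (1 + β) := hbnd
    _ = (L / (1 + β)) * (‖d‖ ^ (1 + β - α) * ‖d‖ ^ α) := by rw [← hsplit]; ring
    _ ≤ (L / (1 + β)) * (r ^ (1 + β - α) * (C * ‖F u - F ustar‖)) := by
        apply mul_le_mul_of_nonneg_left _ (by positivity)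
        exact mul_le_mul h1 h2 (by positivity) (by positivity)
    _ = ((L * C / (1 + β)) * r ^ (1 + β - α)) * ‖F u - F ustar‖ := by ring
end

section
/- Let F : X → Y be Fréchet differentiable between Hilbert spaces with F(u*) = φ, satisfying the weak tangential cone condition 2⟨F(u) − F(u*), F'(u)(u − u*)⟩ ≥ (M² + μ)‖F(u) − F(u*)‖² and the coercivity ‖u − u*‖ ≤ C‖F(u) − F(u*)‖ on a ball B. Then J(u) = ‖F(u) − φ‖² satisfies the Polyak–Łojasiewicz inequality on B: ‖J'(u)‖² ≥ ((M² + μ)²/C²)·J(u), where J'(u) = 2F'(u)*(F(u) − φ) and min J = 0. -/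
/-!
Write `r = F u − φ` and `d = u − u*`. Moving `F'(u)` across the inner product, the tangential
cone condition reads `(M² + μ)‖r‖² ≤ 2⟪F'(u)* r, d⟫ ≤ 2‖F'(u)* r‖ · C‖r‖` by Cauchy–Schwarz and
coercivity. Cancelling one factor `‖r‖` and squaring gives `(M² + μ)²‖r‖² ≤ C²‖J'(u)‖²`.
-/

open RealInnerProductSpace

lemma sq_mul_le_sq_of_mul_sq_le_mul {a x y : ℝ} (ha : 0 ≤ a) (hx : 0 ≤ x)
    (h : a * x ^ 2 ≤ y * x) : (a * x) ^ 2 ≤ y ^ 2 := by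
  rcases hx.eq_or_lt with rfl | hx
  · simpa using sq_nonneg y
  · have hax : a * x ≤ y := le_of_mul_le_mul_right (by linarith) hx
    exact pow_le_pow_left₀ (by positivity) hax 2

lemma div_sq_mul_sq_le_norm_two_smul_adjoint_sq
    {X Y : Type*} [NormedAddCommGroup X] [InnerProductSpace ℝ X] [CompleteSpace X]
    [NormedAddCommGroup Y] [InnerProductSpace ℝ Y] [CompleteSpace Y]
    (A : X →L[ℝ] Y) (r : Y) (d : X) {a C : ℝ} (ha : 0 ≤ a)
    (hcone : a * ‖r‖ ^ 2 ≤ 2 * ⟪r, A d⟫) (hcoe : ‖d‖ ≤ C * ‖r‖) :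
    a ^ 2 / C ^ 2 * ‖r‖ ^ 2 ≤ ‖(2 : ℝ) • ContinuousLinearMap.adjoint A r‖ ^ 2 := by
  set g := ContinuousLinearMap.adjoint A r
  have hbound : a * ‖r‖ ^ 2 ≤ 2 * ‖g‖ * C * ‖r‖ :=
    calc a * ‖r‖ ^ 2 ≤ 2 * ⟪r, A d⟫ := hcone
      _ = 2 * ⟪g, d⟫ := by rw [ContinuousLinearMap.adjoint_inner_left]
      _ ≤ 2 * (‖g‖ * ‖d‖) := by gcongr; exact real_inner_le_norm g d
      _ ≤ 2 * (‖g‖ * (C * ‖r‖)) := by gcongr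
      _ = 2 * ‖g‖ * C * ‖r‖ := by ring
  have hsq := sq_mul_le_sq_of_mul_sq_le_mul ha (norm_nonneg r) hbound
  rw [norm_smul, Real.norm_two, div_mul_eq_mul_div, ← mul_pow]
  exact div_le_of_le_mul₀ (sq_nonneg C) (sq_nonneg _) (by linarith)

theorem pl_from_wtcc_and_coercivity_general
    {X Y : Type*} [NormedAddCommGroup X] [InnerProductSpace ℝ X] [CompleteSpace X]
    [NormedAddCommGroup Y] [InnerProductSpace ℝ Y] [CompleteSpace Y]
    (F : X → Y) (F' : X → X →L[ℝ] Y)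
    (B : Set X) (ustar : X) (φ : Y) (hsol : F ustar = φ)
    (M μ C : ℝ) (hμ : 0 < μ)
    (htcc : ∀ u ∈ B,
      2 * ⟪F u - F ustar, F' u (u - ustar)⟫ ≥ (M ^ 2 + μ) * ‖F u - F ustar‖ ^ 2)
    (hcoe : ∀ u ∈ B, ‖u - ustar‖ ≤ C * ‖F u - F ustar‖) :
    ∀ u ∈ B,
      ‖(2 : ℝ) • ContinuousLinearMap.adjoint (F' u) (F u - φ)‖ ^ 2 ≥
        ((M ^ 2 + μ) ^ 2 / C ^ 2) * ‖F u - φ‖ ^ 2 := by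
  subst hsol
  intro u hu
  exact div_sq_mul_sq_le_norm_two_smul_adjoint_sq (F' u) _ _ (by positivity)
    (htcc u hu) (hcoe u hu)

/-- The weak tangential cone condition together with coercivity (`α = 1`)
implies the Polyak–Łojasiewicz inequality for `J(u) = ‖F(u) − φ‖²`. -/
theorem pl_from_wtcc_and_coercivity
    {X Y : Type*} [NormedAddCommGroup X] [InnerProductSpace ℝ X] [CompleteSpace X]
    [NormedAddCommGroup Y] [InnerProductSpace ℝ Y] [CompleteSpace Y]
    (F : X → Y) (F' : X → X →L[ℝ] Y) (hF : ∀ u, HasFDerivAt F (F' u) u)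
    (B : Set X) (ustar : X) (φ : Y) (hsol : F ustar = φ) (hustar : ustar ∈ B)
    (M μ C : ℝ) (hM : 0 < M) (hμ : 0 < μ) (hC : 0 < C)
    (htcc : ∀ u ∈ B,
      2 * ⟪F u - F ustar, F' u (u - ustar)⟫ ≥ (M ^ 2 + μ) * ‖F u - F ustar‖ ^ 2)
    (hcoe : ∀ u ∈ B, ‖u - ustar‖ ≤ C * ‖F u - F ustar‖) :
    ∀ u ∈ B,
      ‖(2 : ℝ) • ContinuousLinearMap.adjoint (F' u) (F u - φ)‖ ^ 2 ≥
        ((M ^ 2 + μ) ^ 2 / C ^ 2) * ‖F u - φ‖ ^ 2 :=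
  pl_from_wtcc_and_coercivity_general F F' B ustar φ hsol M μ C hμ htcc hcoe
end

section
/- Let F : X → Y be Fréchet differentiable between Hilbert spaces satisfying: ‖F'(u)‖ ≤ M; the weak tangential cone condition 2⟨F(u) − F(v), F'(u)(u − v)⟩ ≥ (M² + μ)‖F(u) − F(v)‖² for all u, v in a ball B; and the lower bound ‖F'(u)* y‖ ≥ (1/C)‖y‖ for all y ∈ Y and u in the interior of B. If C²(C²M² − 1) < μ, then the Landweber residuals decrease strictly: ‖F(u_{k+1}) − φ‖ < ‖F(u_k) − φ‖ whenever ‖F(u_k) − φ‖ ≠ 0 and u_k, u_{k+1} lie in the interior of B. -/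
open RealInnerProductSpace
open scoped InnerProduct

/-! Write `A = F'(u_k)`, `r = F(u_k) - φ` and `d = F(u_{k+1}) - F(u_k)`, so that
`u_k - u_{k+1} = A* r` and the claim is `2⟪d, r⟫ + ‖d‖² < 0`. The bounds
`‖y‖/C ≤ ‖A* y‖ ≤ M ‖y‖` confine the quadratic form of `A A*` to `[1/C², M²]`, so `A A*` lies
within `(M² - 1/C²)/2` of the midpoint multiple of the identity in operator norm. Hence `⟪d, r⟫`
is controlled by `⟪A* d, A* r⟫ = ⟪d, A A* r⟫` up to an error of order `‖d‖ ‖r‖`, while the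
tangential cone condition makes `⟪A* d, A* r⟫ ≤ -(M² + μ)‖d‖²/2`. Coercivity gives
`‖d‖ ≥ ‖r‖/C²`, and the condition `C²(C²M² - 1) < μ` is what lets the negative `‖d‖²` term absorb
the error. -/

namespace ContinuousLinearMap

theorem opNorm_le_of_abs_re_inner_self_le {𝕜 E : Type*} [RCLike 𝕜] [NormedAddCommGroup E]
    [InnerProductSpace 𝕜 E] {T : E →L[𝕜] E} (hT : T.IsSymmetric) {K : ℝ} (hK : 0 ≤ K)
    (h : ∀ x, |RCLike.re (inner 𝕜 (T x) x)| ≤ K * ‖x‖ ^ 2) : ‖T‖ ≤ K := by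
  rw [T.norm_eq_iSup_rayleighQuotient hT]
  refine ciSup_le fun x => ?_
  rcases eq_or_ne x 0 with rfl | hx
  · simpa using hK
  rw [rayleighQuotient, reApplyInnerSelf_apply, abs_div, abs_sq, div_le_iff₀ (by positivity)]
  exact h x

variable {E : Type*} [NormedAddCommGroup E] [InnerProductSpace ℝ E]

theorem norm_sub_midpoint_smul_one_le {T : E →L[ℝ] E} (hT : T.IsSymmetric)
    {a b : ℝ} (hab : a ≤ b) (hlow : ∀ x, a * ‖x‖ ^ 2 ≤ ⟪T x, x⟫)
    (hup : ∀ x, ⟪T x, x⟫ ≤ b * ‖x‖ ^ 2) :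
    ‖T - ((a + b) / 2) • (1 : E →L[ℝ] E)‖ ≤ (b - a) / 2 := by
  have hS : (T - ((a + b) / 2) • (1 : E →L[ℝ] E)).IsSymmetric := by
    simpa using hT.sub (LinearMap.IsSymmetric.one.smul (c := (a + b) / 2) rfl)
  refine opNorm_le_of_abs_re_inner_self_le hS (by linarith) fun x => ?_
  have hx : ⟪(T - ((a + b) / 2) • (1 : E →L[ℝ] E)) x, x⟫ = ⟪T x, x⟫ - (a + b) / 2 * ‖x‖ ^ 2 := by
    simp [inner_sub_left, real_inner_smul_left]
  rw [RCLike.re_to_real, hx, abs_le]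
  constructor <;> nlinarith [hlow x, hup x]

end ContinuousLinearMap

section

open ContinuousLinearMap

variable {X Y : Type*} [NormedAddCommGroup X] [InnerProductSpace ℝ X] [CompleteSpace X]
  [NormedAddCommGroup Y] [InnerProductSpace ℝ Y] [CompleteSpace Y]

theorem norm_comp_adjoint_sub_smul_one_le (A : X →L[ℝ] Y) {m M : ℝ} (hm : 0 ≤ m)
    (hmM : m ≤ M) (hA : ‖A‖ ≤ M) (hlow : ∀ y, m * ‖y‖ ≤ ‖(A†) y‖) :
    ‖A ∘L A† - ((m ^ 2 + M ^ 2) / 2) • (1 : Y →L[ℝ] Y)‖ ≤ (M ^ 2 - m ^ 2) / 2 := by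
  have hquad : ∀ y, ⟪(A ∘L A†) y, y⟫ = ‖(A†) y‖ ^ 2 := fun y => by
    rw [comp_apply, ← adjoint_inner_right, real_inner_self_eq_norm_sq]
  have hA' : ‖A†‖ ≤ M := (LinearIsometryEquiv.norm_map adjoint A).trans_le hA
  refine norm_sub_midpoint_smul_one_le
    (isPositive_self_comp_adjoint A).isSymmetric (by gcongr) (fun y => ?_) (fun y => ?_)
  · rw [hquad, ← mul_pow]
    gcongr
    exact hlow y
  · rw [hquad]
    calc ‖(A†) y‖ ^ 2 ≤ (M * ‖y‖) ^ 2 := by gcongr; exact A†.le_of_opNorm_le hA' y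
      _ = M ^ 2 * ‖y‖ ^ 2 := mul_pow _ _ _

theorem norm_add_lt_norm_of_tangential_cone (A : X →L[ℝ] Y) {m M μ : ℝ} (hm : 0 < m)
    (hA : ‖A‖ ≤ M) (hlow : ∀ y, m * ‖y‖ ≤ ‖(A†) y‖) (hμ : M ^ 2 - m ^ 2 < μ * m ^ 4)
    {r d : Y} (hr : r ≠ 0) (hd : m ^ 2 * ‖r‖ ≤ ‖d‖)
    (htcc : (M ^ 2 + μ) * ‖d‖ ^ 2 ≤ 2 * ⟪-d, A ((A†) r)⟫) :
    ‖r + d‖ < ‖r‖ := by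
  have hρ : 0 < ‖r‖ := norm_pos_iff.mpr hr
  have hmM : m ≤ M := by
    have := (hlow r).trans ((A†).le_of_opNorm_le
      ((LinearIsometryEquiv.norm_map adjoint A).trans_le hA) r)
    exact le_of_mul_le_mul_right this hρ
  set c := (m ^ 2 + M ^ 2) / 2 with hc_def
  set K := (M ^ 2 - m ^ 2) / 2 with hK_def
  have hcross : c * ⟪d, r⟫ - K * ‖d‖ * ‖r‖ ≤ -⟪-d, A ((A†) r)⟫ := by
    set S := A ∘L A† - c • (1 : Y →L[ℝ] Y)
    have hS : ‖S d‖ ≤ K * ‖d‖ :=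
      S.le_of_opNorm_le (norm_comp_adjoint_sub_smul_one_le A hm.le hmM hA hlow) d
    have hSdr : ⟪S d, r⟫ = -⟪-d, A ((A†) r)⟫ - c * ⟪d, r⟫ := by
      simp only [S, sub_apply, smul_apply, inner_sub_left, real_inner_smul_left, inner_neg_left,
        neg_neg]
      rw [(isPositive_self_comp_adjoint A).isSymmetric.apply_clm d r, comp_apply]
      rfl
    have := neg_le_of_abs_le (abs_real_inner_le_norm (S d) r)
    linarith [mul_le_mul_of_nonneg_right hS hρ.le]
  have hK : 0 ≤ K := by
    have := pow_le_pow_left₀ hm.le hmM 2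
    linarith
  have hKμ : 2 * K < (K + μ) * m ^ 2 := by
    have hm2 : 0 < m ^ 2 := by positivity
    refine lt_of_mul_lt_mul_right ?_ hm2.le
    nlinarith [mul_nonneg hK (sq_nonneg (m ^ 2 - 1))]
  have hdpos : 0 < ‖d‖ := (mul_pos (by positivity) hρ).trans_le hd
  have hdr : 2 * K * ‖r‖ < (K + μ) * ‖d‖ := by
    have hKμ' : 0 ≤ K + μ := by nlinarith
    calc 2 * K * ‖r‖ < (K + μ) * m ^ 2 * ‖r‖ := mul_lt_mul_of_pos_right hKμ hρ
      _ ≤ (K + μ) * ‖d‖ := by rw [mul_assoc]; gcongr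
  have hdecrease : 2 * ⟪r, d⟫ + ‖d‖ ^ 2 < 0 := by
    have hc : 0 < c := by positivity
    have hcK : c + K = M ^ 2 := by rw [hc_def, hK_def]; ring
    have : c * (2 * ⟪d, r⟫ + ‖d‖ ^ 2) ≤ ‖d‖ * (2 * K * ‖r‖ - (K + μ) * ‖d‖) := by
      linear_combination 2 * hcross + htcc + ‖d‖ ^ 2 * hcK
    rw [real_inner_comm]
    nlinarith [mul_neg_of_pos_of_neg hdpos (sub_neg.mpr hdr)]
  rw [← sq_lt_sq₀ (norm_nonneg _) hρ.le, norm_add_sq_real]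
  linarith

end

theorem landweber_residual_strictly_decreasing_general
    {X Y : Type*} [NormedAddCommGroup X] [InnerProductSpace ℝ X] [CompleteSpace X]
    [NormedAddCommGroup Y] [InnerProductSpace ℝ Y] [CompleteSpace Y]
    (F : X → Y) (F' : X → X →L[ℝ] Y)
    (B : Set X) (φ : Y)
    (M μ C : ℝ) (hC : 0 < C)
    (hbound : ∀ u ∈ B, ‖F' u‖ ≤ M)
    (htcc : ∀ u ∈ B, ∀ v ∈ B,
      2 * ⟪F u - F v, F' u (u - v)⟫ ≥ (M ^ 2 + μ) * ‖F u - F v‖ ^ 2)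
    (hcoe : ∀ u ∈ B, ∀ v ∈ B, (1 / C) * ‖u - v‖ ≤ ‖F u - F v‖)
    (hadjlow : ∀ u ∈ interior B, ∀ y : Y,
      (1 / C) * ‖y‖ ≤ ‖ContinuousLinearMap.adjoint (F' u) y‖)
    (hconst : C ^ 2 * (C ^ 2 * M ^ 2 - 1) < μ)
    (uk uk1 : X)
    (hstep : uk1 = uk - ContinuousLinearMap.adjoint (F' uk) (F uk - φ))
    (hk : uk ∈ interior B) (hk1 : uk1 ∈ interior B)
    (hres : F uk ≠ φ) :
    ‖F uk1 - φ‖ < ‖F uk - φ‖ := by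
  have hkB : uk ∈ B := interior_subset hk
  have hk1B : uk1 ∈ B := interior_subset hk1
  have hdisplacement : uk - uk1 = ((F' uk)†) (F uk - φ) := by rw [hstep, sub_sub_cancel]
  have hμ : M ^ 2 - (1 / C) ^ 2 < μ * (1 / C) ^ 4 := by
    calc M ^ 2 - (1 / C) ^ 2 = C ^ 2 * (C ^ 2 * M ^ 2 - 1) * (1 / C) ^ 4 := by
          field_simp
      _ < μ * (1 / C) ^ 4 := by gcongr
  have hd : (1 / C) ^ 2 * ‖F uk - φ‖ ≤ ‖F uk1 - F uk‖ :=
    calc (1 / C) ^ 2 * ‖F uk - φ‖ = (1 / C) * ((1 / C) * ‖F uk - φ‖) := by ring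
      _ ≤ (1 / C) * ‖uk - uk1‖ := by
        rw [hdisplacement]
        gcongr
        exact hadjlow uk hk _
      _ ≤ ‖F uk1 - F uk‖ := by
        rw [norm_sub_rev (F uk1)]
        exact hcoe uk hkB uk1 hk1B
  have htcc' : (M ^ 2 + μ) * ‖F uk1 - F uk‖ ^ 2
      ≤ 2 * ⟪-(F uk1 - F uk), F' uk (((F' uk)†) (F uk - φ))⟫ := by
    simpa only [neg_sub, hdisplacement, norm_sub_rev (F uk1)] using htcc uk hkB uk1 hk1B
  have := norm_add_lt_norm_of_tangential_cone (F' uk) (by positivity)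
    (hbound uk hkB) (hadjlow uk hk) hμ (sub_ne_zero.mpr hres) hd htcc'
  rwa [sub_add_sub_cancel'] at this

/-- Strict monotonicity of the Landweber residuals under the weak tangential
cone condition, coercivity with `α = 1` and the lower bound on the adjoint,
provided `C²(C²M² − 1) < μ`. -/
theorem landweber_residual_strictly_decreasing
    {X Y : Type*} [NormedAddCommGroup X] [InnerProductSpace ℝ X] [CompleteSpace X]
    [NormedAddCommGroup Y] [InnerProductSpace ℝ Y] [CompleteSpace Y]
    (F : X → Y) (F' : X → X →L[ℝ] Y) (hF : ∀ u, HasFDerivAt F (F' u) u)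
    (B : Set X) (φ : Y)
    (M μ C : ℝ) (hM : 0 < M) (hMs : M < Real.sqrt 2) (hμ : 0 < μ) (hC : 0 < C)
    (hbound : ∀ u ∈ B, ‖F' u‖ ≤ M)
    (htcc : ∀ u ∈ B, ∀ v ∈ B,
      2 * ⟪F u - F v, F' u (u - v)⟫ ≥ (M ^ 2 + μ) * ‖F u - F v‖ ^ 2)
    (hcoe : ∀ u ∈ B, ∀ v ∈ B, (1 / C) * ‖u - v‖ ≤ ‖F u - F v‖)
    (hadjlow : ∀ u ∈ interior B, ∀ y : Y,
      (1 / C) * ‖y‖ ≤ ‖ContinuousLinearMap.adjoint (F' u) y‖)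
    (hconst : C ^ 2 * (C ^ 2 * M ^ 2 - 1) < μ)
    (uk uk1 : X)
    (hstep : uk1 = uk - ContinuousLinearMap.adjoint (F' uk) (F uk - φ))
    (hk : uk ∈ interior B) (hk1 : uk1 ∈ interior B)
    (hres : F uk ≠ φ) :
    ‖F uk1 - φ‖ < ‖F uk - φ‖ :=
  landweber_residual_strictly_decreasing_general F F' B φ M μ C hC hbound htcc hcoe hadjlow hconst
    uk uk1 hstep hk hk1 hres
end

section
/- Let φ : [0, ∞) → [0, ∞) be superadditive, monotonically increasing with φ(t) → 0 as t → 0, and suppose ‖u_j − u*‖² ≤ φ(‖F(u_j) − φ₀‖²) for all j, together with the summability ∑_{j=0}^k ‖F(u_j) − φ₀‖² ≤ S for all k and the monotonicity ‖u_k − u*‖ ≤ ‖u_j − u*‖ for j ≤ k. Then ‖u_k − u*‖² ≤ φ(S)/k for all k ≥ 1. -/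
/-!
Since `‖u_j − u*‖` is nonincreasing, `k ‖u_k − u*‖²` is at most `∑_{j<k} ‖u_j − u*‖²`. Bounding each
term by conditional stability and collecting the sum with superadditivity gives
`k ‖u_k − u*‖² ≤ φ(∑_{j<k} ‖F(u_j) − φ₀‖²) ≤ φ(S)`.
-/

open Finset Filter

theorem Finset.sum_le_apply_sum_nonempty_of_superadditive {ι : Type*} (φ : ℝ → ℝ)
    (hsuper : ∀ s t : ℝ, 0 ≤ s → 0 ≤ t → φ s + φ t ≤ φ (s + t))
    {s : Finset ι} (hs : s.Nonempty) (a : ι → ℝ) (ha : ∀ i ∈ s, 0 ≤ a i) :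
    ∑ i ∈ s, φ (a i) ≤ φ (∑ i ∈ s, a i) :=
  -- superadditivity of `φ` is subadditivity of `φ` viewed in the order dual
  le_sum_nonempty_of_subadditive_on_pred (fun x => OrderDual.toDual (φ x)) (0 ≤ ·)
    (fun x y hx hy => hsuper x y hx hy) (fun _ _ => add_nonneg) a s hs ha

theorem card_mul_le_sum_range_of_antitone {f : ℕ → ℝ} (hf : Antitone f) (k : ℕ) :
    k * f k ≤ ∑ j ∈ range k, f j := by
  simpa using card_nsmul_le_sum (range k) f (f k) fun j hj => hf (mem_range.mp hj).le

theorem rate_from_conditional_stability_general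
    {X Y : Type*} [NormedAddCommGroup X] [NormedAddCommGroup Y]
    (F : X → Y) (φ₀ : Y) (ustar : X)
    (φfun : ℝ → ℝ)
    (hsuper : ∀ s t : ℝ, 0 ≤ s → 0 ≤ t → φfun s + φfun t ≤ φfun (s + t))
    (hmono : ∀ s t : ℝ, 0 ≤ s → s ≤ t → φfun s ≤ φfun t)
    (S : ℝ)
    (u : ℕ → X)
    (hstab : ∀ j : ℕ, ‖u j - ustar‖ ^ 2 ≤ φfun (‖F (u j) - φ₀‖ ^ 2))
    (hsum : ∀ k : ℕ, ∑ j ∈ range (k + 1), ‖F (u j) - φ₀‖ ^ 2 ≤ S)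
    (hanti : Antitone (fun k => ‖u k - ustar‖)) :
    ∀ k : ℕ, 1 ≤ k → ‖u k - ustar‖ ^ 2 ≤ φfun S / k := by
  intro k hk
  have hres_nonneg : ∀ j ∈ range k, 0 ≤ ‖F (u j) - φ₀‖ ^ 2 := fun j _ => sq_nonneg _
  have hres_sum : ∑ j ∈ range k, ‖F (u j) - φ₀‖ ^ 2 ≤ S :=
    (sum_le_sum_of_subset_of_nonneg (range_subset_range.mpr k.le_succ)
      fun j _ _ => sq_nonneg _).trans (hsum k)
  have herr_anti : Antitone fun j => ‖u j - ustar‖ ^ 2 :=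
    fun i j hij => pow_le_pow_left₀ (norm_nonneg _) (hanti hij) 2
  rw [le_div_iff₀ (by positivity), mul_comm]
  calc (k : ℝ) * ‖u k - ustar‖ ^ 2
      ≤ ∑ j ∈ range k, ‖u j - ustar‖ ^ 2 := card_mul_le_sum_range_of_antitone herr_anti k
    _ ≤ ∑ j ∈ range k, φfun (‖F (u j) - φ₀‖ ^ 2) := sum_le_sum fun j _ => hstab j
    _ ≤ φfun (∑ j ∈ range k, ‖F (u j) - φ₀‖ ^ 2) :=
      sum_le_apply_sum_nonempty_of_superadditive φfun hsuper (nonempty_range_iff.mpr (by omega))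
        _ hres_nonneg
    _ ≤ φfun S := hmono _ _ (sum_nonneg hres_nonneg) hres_sum

/-- Conditional stability via a superadditive index function: the iterates of a
Fejér monotone sequence with square-summable residuals satisfy
`‖u_k − u*‖² ≤ φ(S)/k`. -/
theorem rate_from_conditional_stability
    {X Y : Type*} [NormedAddCommGroup X] [NormedAddCommGroup Y]
    (F : X → Y) (φ₀ : Y) (ustar : X) (hsol : F ustar = φ₀)
    (φfun : ℝ → ℝ)
    (hnn : ∀ t, 0 ≤ t → 0 ≤ φfun t)
    (hsuper : ∀ s t : ℝ, 0 ≤ s → 0 ≤ t → φfun s + φfun t ≤ φfun (s + t))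
    (hmono : ∀ s t : ℝ, 0 ≤ s → s ≤ t → φfun s ≤ φfun t)
    (hlim : Tendsto φfun (nhdsWithin 0 (Set.Ioi 0)) (nhds 0))
    (S : ℝ) (hS : 0 < S)
    (u : ℕ → X)
    (hstab : ∀ j : ℕ, ‖u j - ustar‖ ^ 2 ≤ φfun (‖F (u j) - φ₀‖ ^ 2))
    (hsum : ∀ k : ℕ, ∑ j ∈ range (k + 1), ‖F (u j) - φ₀‖ ^ 2 ≤ S)
    (hanti : Antitone (fun k => ‖u k - ustar‖)) :
    ∀ k : ℕ, 1 ≤ k → ‖u k - ustar‖ ^ 2 ≤ φfun S / k :=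
  rate_from_conditional_stability_general F φ₀ ustar φfun hsuper hmono S u hstab hsum hanti
end
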